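/- arXiv:1410.0641 — 3 statements merged into one kernel-verified Lean document; each statement's English description precedes it below -/
import Mathlib

section
/- In the setting of Problem 1, choose μ > 0, α̲ > 0 and β ≥ 0 satisfying μ(σ − L_{∇g}α̲) > β(μ² + 1), define M_1 = (σ − ᾱL_{∇g})/(2ᾱ) − μβ/(2α̲) and M_2 = β/(2μα̲), and choose ᾱ > α̲ such that M_1 > M_2. Assume f + g is bounded from below, and let (x_n)_{n∈ℕ} be a sequence generated by Algorithm 1. Then ∑_{n≥1} ‖x_n − x_{n−1}‖² < +∞. -/
open Filter Topology RealInnerProductSpace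

noncomputable section

variable {E : Type*} [NormedAddCommGroup E] [InnerProductSpace ℝ E]

/-- The Fréchet (viscosity) subdifferential of an extended-real-valued function `h` at `x`:
`v` belongs to it iff `x ∈ dom h` and
`liminf_{y → x} (h y - h x - ⟪v, y - x⟫)/‖y - x‖ ≥ 0`, expressed equivalently by the
epsilon-characterization of the liminf. -/
def frechetSubdiff (h : E → EReal) (x : E) : Set E :=
  {v | h x ≠ ⊤ ∧ ∀ ε : ℝ, 0 < ε →
    ∀ᶠ y in 𝓝 x, (((h x).toReal + ⟪v, y - x⟫ - ε * ‖y - x‖ : ℝ) : EReal) ≤ h y}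

/-- The limiting (Mordukhovich) subdifferential of `h` at `x`. -/
def limitingSubdiff (h : E → EReal) (x : E) : Set E :=
  {v | h x ≠ ⊤ ∧ ∃ xk vk : ℕ → E,
    Tendsto xk atTop (𝓝 x) ∧
    Tendsto (fun k => h (xk k)) atTop (𝓝 (h x)) ∧
    (∀ k, vk k ∈ frechetSubdiff h (xk k)) ∧
    Tendsto vk atTop (𝓝 v)}


/-! With `Φ = f + g`, comparing the minimiser `x (n+1)` with the candidate `x n` and using strong
convexity of `F` and the descent lemma for `g` gives
`α n (Φ (x (n+1)) - Φ (x n)) + (σ - α n Lg)/2 ‖x (n+1) - x n‖² ≤ βs n ‖x (n+1) - x n‖ ‖x n - x (n-1)‖`.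
Young's inequality with weight `μ` turns this into `H (n+1) + (M1 - M2) ‖x (n+1) - x n‖² ≤ H n`
for `H n = Φ (x n) + M2 ‖x n - x (n-1)‖²`; since `H` is bounded below, telescoping bounds the
partial sums of the squared increments. -/

theorem lyapunov_decrease_of_step {α αlo αhi b β σ L μ Φ₁ Φ₂ a c : ℝ}
    (hαlo : 0 < αlo) (hα₁ : αlo ≤ α) (hα₂ : α ≤ αhi) (hb₁ : 0 ≤ b) (hb₂ : b ≤ β)
    (hμ : 0 < μ) (hσ : 0 ≤ σ)
    (h : α * (Φ₂ - Φ₁) + (σ - α * L) / 2 * a ^ 2 ≤ b * (a * c)) :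
    Φ₂ + ((σ - αhi * L) / (2 * αhi) - μ * β / (2 * αlo)) * a ^ 2
      ≤ Φ₁ + β / (2 * μ * αlo) * c ^ 2 := by
  have hαpos : 0 < α := hαlo.trans_le hα₁
  have hαhi : 0 < αhi := hαpos.trans_le hα₂
  have hscaled : Φ₂ - Φ₁ + (σ / (2 * α) - L / 2) * a ^ 2 ≤ b / α * (a * c) := by
    have : α * (Φ₂ - Φ₁ + (σ / (2 * α) - L / 2) * a ^ 2) ≤ α * (b / α * (a * c)) := by
      field_simp
      linarith
    exact le_of_mul_le_mul_left this hαpos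
  have hamgm : a * c ≤ μ / 2 * a ^ 2 + 1 / (2 * μ) * c ^ 2 := by
    have := two_mul_le_add_sq (μ * a) c
    field_simp
    nlinarith
  have hbα : b / α ≤ β / αlo := div_le_div₀ (hb₁.trans hb₂) hb₂ hαlo hα₁
  have hbα₀ : 0 ≤ b / α := div_nonneg hb₁ hαpos.le
  calc Φ₂ + ((σ - αhi * L) / (2 * αhi) - μ * β / (2 * αlo)) * a ^ 2
      = Φ₂ + (σ / (2 * αhi) - L / 2 - μ / 2 * (β / αlo)) * a ^ 2 := by
        field_simp
    _ ≤ Φ₂ + (σ / (2 * α) - L / 2 - μ / 2 * (b / α)) * a ^ 2 := by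
        gcongr
    _ ≤ Φ₁ + 1 / (2 * μ) * (b / α) * c ^ 2 := by
        nlinarith [mul_le_mul_of_nonneg_left hamgm hbα₀]
    _ ≤ Φ₁ + β / (2 * μ * αlo) * c ^ 2 := by
        rw [show β / (2 * μ * αlo) = 1 / (2 * μ) * (β / αlo) by field_simp]
        gcongr

theorem ConvexOn.apply_add_le_of_hasFDerivAt {V : Type*} [NormedAddCommGroup V]
    [NormedSpace ℝ V] {f : V → ℝ} {f' : V →L[ℝ] ℝ} {x : V} (hf : ConvexOn ℝ Set.univ f)
    (hf' : HasFDerivAt f f' x) (y : V) : f x + f' (y - x) ≤ f y := by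
  have hline : ConvexOn ℝ Set.univ (f ∘ AffineMap.lineMap (k := ℝ) x y) := by
    simpa using hf.comp_affineMap (AffineMap.lineMap x y)
  have hderiv : HasDerivAt (f ∘ AffineMap.lineMap (k := ℝ) x y) (f' (y - x)) 0 :=
    (AffineMap.lineMap_apply_zero (k := ℝ) x y ▸ hf').comp_hasDerivAt 0
      AffineMap.hasDerivAt_lineMap
  have := hline.le_slope_of_hasDerivAt (Set.mem_univ 0) (Set.mem_univ 1) one_pos hderiv
  simp only [slope_def_field, Function.comp_apply, AffineMap.lineMap_apply_zero,
    AffineMap.lineMap_apply_one, sub_zero, div_one] at this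
  linarith

theorem summable_of_add_mul_le {H a : ℕ → ℝ} {c b : ℝ} (hc : 0 < c) (ha : ∀ n, 0 ≤ a n)
    (hH : ∀ n, H (n + 1) + c * a n ≤ H n) (hbdd : ∀ n, b ≤ H n) : Summable a := by
  refine summable_of_sum_range_le ha (c := (H 0 - b) / c) fun N => ?_
  have htel : H N + c * ∑ i ∈ Finset.range N, a i ≤ H 0 := by
    induction N with
    | zero => simp
    | succ N ih =>
      rw [Finset.sum_range_succ]
      linarith [hH N]
  rw [le_div_iff₀ hc]
  linarith [hbdd N]

theorem EReal.ne_top_of_coe_add_mul_le {r s α : ℝ} {p q : EReal} (hα : 0 < α) (hq : q ≠ ⊤)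
    (hq' : q ≠ ⊥) (h : (r : EReal) + α * p ≤ s + α * q) : p ≠ ⊤ := by
  rintro rfl
  lift q to ℝ using ⟨hq, hq'⟩
  rw [EReal.coe_mul_top_of_pos hα, EReal.coe_add_top] at h
  exact (EReal.coe_lt_top _).not_ge (by exact_mod_cast h)

section Bregman

variable [CompleteSpace E]

def bregmanDist (F : E → ℝ) (u v : E) : ℝ := F u - F v - ⟪gradient F v, u - v⟫

theorem half_mul_sq_norm_sub_le_bregmanDist {F : E → ℝ} {σ : ℝ}
    (hconv : ConvexOn ℝ Set.univ fun z => F z - σ / 2 * ‖z‖ ^ 2) (hdiff : Differentiable ℝ F)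
    (u v : E) : σ / 2 * ‖u - v‖ ^ 2 ≤ bregmanDist F u v := by
  have hG : HasFDerivAt (fun z => F z - σ / 2 * ‖z‖ ^ 2)
      (InnerProductSpace.toDual ℝ E (gradient F v) - (σ / 2) • 2 • innerSL ℝ v) v :=
    (hdiff v).hasGradientAt.hasFDerivAt.sub
      ((hasStrictFDerivAt_norm_sq v).hasFDerivAt.const_mul (σ / 2))
  have key : F v - σ / 2 * ‖v‖ ^ 2 + (⟪gradient F v, u - v⟫ - σ * ⟪v, u - v⟫)
      ≤ F u - σ / 2 * ‖u‖ ^ 2 := by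
    convert hconv.apply_add_le_of_hasFDerivAt hG u using 2
    simp only [sub_apply, smul_apply, innerSL_apply_apply,
      InnerProductSpace.toDual_apply_apply, smul_eq_mul]
    ring
  have hsq : ‖u - v‖ ^ 2 = ‖u‖ ^ 2 - ‖v‖ ^ 2 - 2 * ⟪v, u - v⟫ := by
    rw [norm_sub_sq_real, inner_sub_right, real_inner_self_eq_norm_sq, real_inner_comm]
    ring
  rw [bregmanDist, hsq]
  linarith

theorem descent_lemma {g : E → ℝ} {L : ℝ} (hdiff : Differentiable ℝ g)
    (hlip : ∀ z w, ‖gradient g z - gradient g w‖ ≤ L * ‖z - w‖) (u v : E) :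
    g u ≤ g v + ⟪gradient g v, u - v⟫ + L / 2 * ‖u - v‖ ^ 2 := by
  set w := u - v
  set χ : ℝ → ℝ := fun t => g (v + t • w) - t * ⟪gradient g v, w⟫ - L / 2 * t ^ 2 * ‖w‖ ^ 2
  have hχ : ∀ t, HasDerivAt χ
      (⟪gradient g (v + t • w) - gradient g v, w⟫ - L * t * ‖w‖ ^ 2) t := by
    intro t
    have hline : HasDerivAt (fun s : ℝ => v + s • w) w t := by
      simpa using ((hasDerivAt_id t).smul_const w).const_add v
    have hg := (hdiff (v + t • w)).hasGradientAt.hasFDerivAt.comp_hasDerivAt t hline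
    have hq := ((hasDerivAt_pow 2 t).const_mul (L / 2)).mul_const (‖w‖ ^ 2)
    refine ((hg.sub ((hasDerivAt_id t).mul_const ⟪gradient g v, w⟫)).sub hq).congr_deriv ?_
    simp only [InnerProductSpace.toDual_apply_apply, inner_sub_left]
    ring
  have hχ_nonpos : ∀ t ∈ interior (Set.Icc (0 : ℝ) 1),
      ⟪gradient g (v + t • w) - gradient g v, w⟫ - L * t * ‖w‖ ^ 2 ≤ 0 := by
    intro t ht
    rw [interior_Icc] at ht
    have hlip_t : ‖gradient g (v + t • w) - gradient g v‖ ≤ L * t * ‖w‖ := by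
      simpa [norm_smul, abs_of_pos ht.1, mul_assoc] using hlip (v + t • w) v
    refine sub_nonpos.mpr ?_
    calc ⟪gradient g (v + t • w) - gradient g v, w⟫
        ≤ ‖gradient g (v + t • w) - gradient g v‖ * ‖w‖ := real_inner_le_norm _ _
      _ ≤ L * t * ‖w‖ * ‖w‖ := by gcongr
      _ = L * t * ‖w‖ ^ 2 := by ring
  have hanti : AntitoneOn χ (Set.Icc 0 1) :=
    antitoneOn_of_hasDerivWithinAt_nonpos (convex_Icc 0 1)
      (fun t _ => (hχ t).continuousAt.continuousWithinAt)
      (fun t _ => (hχ t).hasDerivWithinAt) hχ_nonpos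
  have h01 := hanti (by simp) (by simp) zero_le_one
  simp only [χ, zero_smul, add_zero, zero_mul, one_smul, one_mul, one_pow, w,
    add_sub_cancel] at h01
  linarith

theorem inertial_step_descent {F g : E → ℝ} {σ L α b f₁ f₂ : ℝ} {x₀ x₁ x₂ : E}
    (hconv : ConvexOn ℝ Set.univ fun z => F z - σ / 2 * ‖z‖ ^ 2) (hFdiff : Differentiable ℝ F)
    (hgdiff : Differentiable ℝ g) (hlip : ∀ z w, ‖gradient g z - gradient g w‖ ≤ L * ‖z - w‖)
    (hα : 0 ≤ α) (hb : 0 ≤ b)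
    (hmin : bregmanDist F x₂ x₁ + α * ⟪x₂, gradient g x₁⟫ + b * ⟪x₂, x₀ - x₁⟫ + α * f₂
      ≤ bregmanDist F x₁ x₁ + α * ⟪x₁, gradient g x₁⟫ + b * ⟪x₁, x₀ - x₁⟫ + α * f₁) :
    α * (f₂ + g x₂ - (f₁ + g x₁)) + (σ - α * L) / 2 * ‖x₂ - x₁‖ ^ 2
      ≤ b * (‖x₂ - x₁‖ * ‖x₁ - x₀‖) := by
  have hD := half_mul_sq_norm_sub_le_bregmanDist hconv hFdiff x₂ x₁
  have hD₀ : bregmanDist F x₁ x₁ = 0 := by simp [bregmanDist]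
  have hdesc := mul_le_mul_of_nonneg_left (descent_lemma hgdiff hlip x₂ x₁) hα
  have hinertia : -(‖x₂ - x₁‖ * ‖x₁ - x₀‖) ≤ ⟪x₂ - x₁, x₀ - x₁⟫ := by
    rw [← norm_sub_rev x₀]
    exact neg_le_of_abs_le (abs_real_inner_le_norm _ _)
  have hinertia' := mul_le_mul_of_nonneg_left hinertia hb
  have hgrad : ⟪x₂, gradient g x₁⟫ - ⟪x₁, gradient g x₁⟫ = ⟪gradient g x₁, x₂ - x₁⟫ := by
    rw [← inner_sub_left, real_inner_comm]
  have hmom : ⟪x₂, x₀ - x₁⟫ - ⟪x₁, x₀ - x₁⟫ = ⟪x₂ - x₁, x₀ - x₁⟫ := (inner_sub_left _ _ _).symm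
  linear_combination hmin + hD + hdesc + hinertia' - α * hgrad - b * hmom + hD₀

end Bregman

theorem stmt6_general
    (m : ℕ)
    (f : EuclideanSpace ℝ (Fin m) → EReal)
    -- `f` is proper (never `⊥`, somewhere finite), lower semicontinuous and bounded below
    (hfbot : ∀ z, f z ≠ ⊥) (hfproper : ∃ z, f z ≠ ⊤)
    -- `g` is differentiable with `Lg`-Lipschitz gradient
    (g : EuclideanSpace ℝ (Fin m) → ℝ) (Lg : ℝ)
    (hgdiff : Differentiable ℝ g)
    (hglip : ∀ z w, ‖gradient g z - gradient g w‖ ≤ Lg * ‖z - w‖)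
    -- `F` is `σ`-strongly convex and differentiable with `LF`-Lipschitz gradient
    (F : EuclideanSpace ℝ (Fin m) → ℝ) (σ : ℝ) (hσ : 0 < σ)
    (hFconv : ConvexOn ℝ Set.univ fun z => F z - σ / 2 * ‖z‖ ^ 2)
    (hFdiff : Differentiable ℝ F)
    -- parameters of the algorithm
    (αlo αhi β : ℝ) (hαlo : 0 < αlo) (hβ : 0 ≤ β)
    (α βs : ℕ → ℝ)
    (hα : ∀ n, 1 ≤ n → αlo ≤ α n ∧ α n ≤ αhi)
    (hβs : ∀ n, 1 ≤ n → 0 ≤ βs n ∧ βs n ≤ β)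
    -- the sequence generated by Algorithm 1:
    -- `x (n+1)` minimizes `u ↦ D_F(u, x n) + α n • ⟪u, ∇g(x n)⟫ + βs n • ⟪u, x (n-1) - x n⟫ + α n • f u`
    (x : ℕ → EuclideanSpace ℝ (Fin m))
    (halg : ∀ n, 1 ≤ n → ∀ u,
      ((F (x (n + 1)) - F (x n) - ⟪gradient F (x n), x (n + 1) - x n⟫
          + α n * ⟪x (n + 1), gradient g (x n)⟫
          + βs n * ⟪x (n + 1), x (n - 1) - x n⟫ : ℝ) : EReal)
        + (α n : EReal) * f (x (n + 1))
      ≤ ((F u - F (x n) - ⟪gradient F (x n), u - x n⟫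
          + α n * ⟪u, gradient g (x n)⟫
          + βs n * ⟪u, x (n - 1) - x n⟫ : ℝ) : EReal)
        + (α n : EReal) * f u)
    -- the parameters `μ, αlo, β` satisfy `μ(σ - Lg·αlo) > β(μ² + 1)` and `αhi` is chosen
    -- with `αlo < αhi` such that `M1 > M2`
    (μ : ℝ) (hμ : 0 < μ)
    (M1 M2 : ℝ)
    (hM1 : M1 = (σ - αhi * Lg) / (2 * αhi) - μ * β / (2 * αlo))
    (hM2 : M2 = β / (2 * μ * αlo))
    (hM : M2 < M1)

    -- `f + g` is bounded from below
    (hfgbdd : ∃ c : ℝ, ∀ z, (c : EReal) ≤ f z + ((g z : ℝ) : EReal))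
    :
    Summable fun n => ‖x (n + 1) - x n‖ ^ 2 := by
  obtain ⟨z₀, hz₀⟩ := hfproper
  obtain ⟨c, hc⟩ := hfgbdd
  have hαpos : ∀ n, 1 ≤ n → 0 < α n := fun n hn => hαlo.trans_le (hα n hn).1
  -- `x 0` and `x 1` are arbitrary, so `f` is known to be finite only from `x 2` on.
  have hfin : ∀ k, f (x (k + 2)) = ((f (x (k + 2))).toReal : EReal) := fun k =>
    (EReal.coe_toReal (EReal.ne_top_of_coe_add_mul_le (hαpos (k + 1) (by omega)) hz₀ (hfbot z₀)
      (halg (k + 1) (by omega) z₀)) (hfbot _)).symm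
  set Φ : ℕ → ℝ := fun n => (f (x n)).toReal + g (x n)
  have hstep : ∀ k, Φ (k + 3) + M1 * ‖x (k + 3) - x (k + 2)‖ ^ 2
      ≤ Φ (k + 2) + M2 * ‖x (k + 2) - x (k + 1)‖ ^ 2 := by
    intro k
    have hmin := halg (k + 2) (by omega) (x (k + 2))
    rw [hfin (k + 1), hfin k] at hmin
    obtain ⟨hα₁, hα₂⟩ := hα (k + 2) (by omega)
    obtain ⟨hb₁, hb₂⟩ := hβs (k + 2) (by omega)
    rw [hM1, hM2]
    exact lyapunov_decrease_of_step hαlo hα₁ hα₂ hb₁ hb₂ hμ hσ.le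
      (inertial_step_descent hFconv hFdiff hgdiff hglip (hαpos _ (by omega)).le hb₁
        (by exact_mod_cast hmin))
  refine (summable_nat_add_iff 2).mp
    (summable_of_add_mul_le (H := fun k => Φ (k + 2) + M2 * ‖x (k + 2) - x (k + 1)‖ ^ 2)
      (b := c) (sub_pos.2 hM) (fun _ => by positivity) (fun k => by linarith [hstep k])
      (fun k => ?_))
  have hM2_nonneg : 0 ≤ M2 := by rw [hM2]; positivity
  have hΦ : c ≤ Φ (k + 2) := by
    have := hc (x (k + 2))
    rw [hfin k] at this
    exact_mod_cast this
  linarith [mul_nonneg hM2_nonneg (sq_nonneg ‖x (k + 2) - x (k + 1)‖)]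

/-- Proposition 3.2(a): under the parameter conditions and boundedness below of `f + g`,
the squared increments of the iterates of Algorithm 1 are summable. -/
theorem stmt6
    (m : ℕ)
    (f : EuclideanSpace ℝ (Fin m) → EReal)
    -- `f` is proper (never `⊥`, somewhere finite), lower semicontinuous and bounded below
    (hfbot : ∀ z, f z ≠ ⊥) (hfproper : ∃ z, f z ≠ ⊤)
    (hflsc : LowerSemicontinuous f)
    (hfbdd : ∃ cl : ℝ, ∀ z, (cl : EReal) ≤ f z)
    -- `g` is differentiable with `Lg`-Lipschitz gradient
    (g : EuclideanSpace ℝ (Fin m) → ℝ) (Lg : ℝ) (hLg : 0 ≤ Lg)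
    (hgdiff : Differentiable ℝ g)
    (hglip : ∀ z w, ‖gradient g z - gradient g w‖ ≤ Lg * ‖z - w‖)
    -- `F` is `σ`-strongly convex and differentiable with `LF`-Lipschitz gradient
    (F : EuclideanSpace ℝ (Fin m) → ℝ) (σ LF : ℝ) (hσ : 0 < σ) (hLF : 0 < LF)
    (hFconv : ConvexOn ℝ Set.univ fun z => F z - σ / 2 * ‖z‖ ^ 2)
    (hFdiff : Differentiable ℝ F)
    (hFlip : ∀ z w, ‖gradient F z - gradient F w‖ ≤ LF * ‖z - w‖)
    -- parameters of the algorithm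
    (αlo αhi β : ℝ) (hαlo : 0 < αlo) (hαorder : αlo ≤ αhi) (hβ : 0 ≤ β)
    (α βs : ℕ → ℝ)
    (hα : ∀ n, 1 ≤ n → αlo ≤ α n ∧ α n ≤ αhi)
    (hβs : ∀ n, 1 ≤ n → 0 ≤ βs n ∧ βs n ≤ β)
    -- the sequence generated by Algorithm 1:
    -- `x (n+1)` minimizes `u ↦ D_F(u, x n) + α n • ⟪u, ∇g(x n)⟫ + βs n • ⟪u, x (n-1) - x n⟫ + α n • f u`
    (x : ℕ → EuclideanSpace ℝ (Fin m))
    (halg : ∀ n, 1 ≤ n → ∀ u,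
      ((F (x (n + 1)) - F (x n) - ⟪gradient F (x n), x (n + 1) - x n⟫
          + α n * ⟪x (n + 1), gradient g (x n)⟫
          + βs n * ⟪x (n + 1), x (n - 1) - x n⟫ : ℝ) : EReal)
        + (α n : EReal) * f (x (n + 1))
      ≤ ((F u - F (x n) - ⟪gradient F (x n), u - x n⟫
          + α n * ⟪u, gradient g (x n)⟫
          + βs n * ⟪u, x (n - 1) - x n⟫ : ℝ) : EReal)
        + (α n : EReal) * f u)
    -- the parameters `μ, αlo, β` satisfy `μ(σ - Lg·αlo) > β(μ² + 1)` and `αhi` is chosen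
    -- with `αlo < αhi` such that `M1 > M2`
    (μ : ℝ) (hμ : 0 < μ)
    (hcond : β * (μ ^ 2 + 1) < μ * (σ - Lg * αlo))
    (M1 M2 : ℝ)
    (hM1 : M1 = (σ - αhi * Lg) / (2 * αhi) - μ * β / (2 * αlo))
    (hM2 : M2 = β / (2 * μ * αlo))
    (hαstrict : αlo < αhi) (hM : M2 < M1)

    -- `f + g` is bounded from below
    (hfgbdd : ∃ c : ℝ, ∀ z, (c : EReal) ≤ f z + ((g z : ℝ) : EReal))
    :
    Summable fun n => ‖x (n + 1) - x n‖ ^ 2 :=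
  stmt6_general m f hfbot hfproper g Lg hgdiff hglip F σ hσ hFconv hFdiff αlo αhi β hαlo hβ α βs hα
    hβs x halg μ hμ M1 M2 hM1 hM2 hM hfgbdd
end
end

section
/- In the setting of Problem 1, choose μ > 0, α̲ > 0 and β ≥ 0 satisfying μ(σ − L_{∇g}α̲) > β(μ² + 1), define M_1 = (σ − ᾱL_{∇g})/(2ᾱ) − μβ/(2α̲) and M_2 = β/(2μα̲), choose ᾱ > α̲ such that M_1 > M_2, assume f + g is coercive, and let (x_n)_{n∈ℕ} be a sequence generated by Algorithm 1. Define H : ℝ^m × ℝ^m → (−∞,+∞] by H(x,y) = (f+g)(x) + M_2‖x−y‖². Then with M = M_1 − M_2 > 0 one has H(x_{n+1}, x_n) + M‖x_{n+1} − x_n‖² ≤ H(x_n, x_{n−1}) for all n ≥ 1. -/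
open Filter Topology RealInnerProductSpace

noncomputable section

variable {E : Type*} [NormedAddCommGroup E] [InnerProductSpace ℝ E]

/-!
Testing the minimality of `x (n + 1)` against `u = x n` gives
`D_F(x_{n+1}, x_n) + α_n ⟪x_{n+1} - x_n, ∇g x_n⟫ - β_n ⟪x_{n+1} - x_n, x_n - x_{n-1}⟫
  + α_n f x_{n+1} ≤ α_n f x_n`.
Strong convexity of `F` bounds the Bregman distance below by `σ/2 ‖x_{n+1} - x_n‖²`, the descent
lemma for `g` trades the linear term for `α_n L_g/2 ‖x_{n+1} - x_n‖²`, and Young's inequality with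
weight `μ` splits the inertial term between `‖x_{n+1} - x_n‖²` and `‖x_n - x_{n-1}‖²`. Dividing by
`α_n` and using `α̲ ≤ α_n ≤ ᾱ`, `β_n ≤ β`, the two coefficients are controlled by `M1` and `M2`.
If `f x_n = ⊤` there is nothing to prove; otherwise minimality forces `f x_{n+1}` finite and the
estimate is one between reals.
-/

section FirstOrder

variable {V : Type*} [NormedAddCommGroup V] [NormedSpace ℝ V]

theorem HasFDerivAt.hasDerivAt_comp_add_smul {φ : V → ℝ} {φ' : V →L[ℝ] ℝ} {x d : V} {t : ℝ}
    (h : HasFDerivAt φ φ' (x + t • d)) :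
    HasDerivAt (fun s : ℝ => φ (x + s • d)) (φ' d) t := by
  have hline : HasDerivAt (fun s : ℝ => x + s • d) d t := by
    simpa using ((hasDerivAt_id t).smul_const d).const_add x
  exact h.comp_hasDerivAt t hline

theorem ConvexOn.add_le_of_hasFDerivAt {φ : V → ℝ} {φ' : V →L[ℝ] ℝ} {x : V}
    (hφ : ConvexOn ℝ Set.univ φ) (h : HasFDerivAt φ φ' x) (y : V) :
    φ x + φ' (y - x) ≤ φ y := by
  have hline : ConvexOn ℝ Set.univ (fun s : ℝ => φ (x + s • (y - x))) := by
    have heq : (fun s : ℝ => φ (x + s • (y - x))) = φ ∘ AffineMap.lineMap x y := by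
      ext s
      simp [AffineMap.lineMap_apply, add_comm]
    simpa [heq] using hφ.comp_affineMap (AffineMap.lineMap x y)
  have hderiv : HasDerivAt (fun s : ℝ => φ (x + s • (y - x))) (φ' (y - x)) 0 :=
    HasFDerivAt.hasDerivAt_comp_add_smul (by simpa using h)
  have := hline.le_slope_of_hasDerivAt (Set.mem_univ 0) (Set.mem_univ 1) zero_lt_one hderiv
  simp only [slope_def_field, zero_smul, add_zero, one_smul, add_sub_cancel, sub_zero,
    div_one] at this
  linarith

end FirstOrder

section InnerProduct

theorem real_inner_le_young {μ : ℝ} (hμ : 0 < μ) (u v : E) :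
    ⟪u, v⟫ ≤ μ / 2 * ‖u‖ ^ 2 + 1 / (2 * μ) * ‖v‖ ^ 2 := by
  have h := norm_sub_sq_real (μ • u) v
  rw [norm_smul, real_inner_smul_left, Real.norm_of_nonneg hμ.le] at h
  have hsq := sq_nonneg ‖μ • u - v‖
  rw [h] at hsq
  have hrhs : μ / 2 * ‖u‖ ^ 2 + 1 / (2 * μ) * ‖v‖ ^ 2 = ((μ * ‖u‖) ^ 2 + ‖v‖ ^ 2) / (2 * μ) := by
    field_simp
  rw [hrhs, le_div_iff₀ (by positivity)]
  linarith

variable [CompleteSpace E]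

theorem add_inner_gradient_add_sq_norm_le {F : E → ℝ} {σ : ℝ}
    (hconv : ConvexOn ℝ Set.univ fun z => F z - σ / 2 * ‖z‖ ^ 2) {x : E}
    (hF : DifferentiableAt ℝ F x) (y : E) :
    F x + ⟪gradient F x, y - x⟫ + σ / 2 * ‖y - x‖ ^ 2 ≤ F y := by
  have hderiv := hF.hasFDerivAt.sub ((hasFDerivAt_id x).norm_sq.const_mul (σ / 2))
  have := hconv.add_le_of_hasFDerivAt hderiv y
  have hsq : ‖y‖ ^ 2 = ‖x‖ ^ 2 + 2 * ⟪x, y - x⟫ + ‖y - x‖ ^ 2 := by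
    rw [← norm_add_sq_real, add_sub_cancel]
  simp only [id_eq, ContinuousLinearMap.comp_id, sub_apply,
    smul_apply, coe_innerSL_apply, nsmul_eq_mul, Nat.cast_ofNat, smul_eq_mul,
    hsq, inner_gradient_left] at this ⊢
  linarith

theorem le_add_inner_gradient_add_sq_norm {g : E → ℝ} {L : ℝ} (hg : Differentiable ℝ g)
    (hlip : ∀ z w, ‖gradient g z - gradient g w‖ ≤ L * ‖z - w‖) (x y : E) :
    g y ≤ g x + ⟪gradient g x, y - x⟫ + L / 2 * ‖y - x‖ ^ 2 := by
  set d := y - x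
  set ψ : ℝ → ℝ := fun t => g (x + t • d) - t * ⟪gradient g x, d⟫ - L / 2 * ‖d‖ ^ 2 * t ^ 2
  have hderiv : ∀ t : ℝ, HasDerivAt ψ
      (⟪gradient g (x + t • d), d⟫ - ⟪gradient g x, d⟫ - L / 2 * ‖d‖ ^ 2 * (2 * t)) t := by
    intro t
    have hline := (hg (x + t • d)).hasFDerivAt.hasDerivAt_comp_add_smul
    rw [← inner_gradient_left] at hline
    exact (hline.sub (by simpa using hasDerivAt_mul_const ⟪gradient g x, d⟫)).sub
      (by simpa using (hasDerivAt_pow 2 t).const_mul (L / 2 * ‖d‖ ^ 2))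
  have hanti : AntitoneOn ψ (Set.Icc 0 1) := by
    refine antitoneOn_of_deriv_nonpos (convex_Icc 0 1)
      (fun t _ => (hderiv t).continuousAt.continuousWithinAt)
      (fun t _ => (hderiv t).differentiableAt.differentiableWithinAt) fun t ht => ?_
    rw [interior_Icc] at ht
    have hgap : ⟪gradient g (x + t • d) - gradient g x, d⟫ ≤ L * t * ‖d‖ ^ 2 :=
      calc ⟪gradient g (x + t • d) - gradient g x, d⟫
          ≤ ‖gradient g (x + t • d) - gradient g x‖ * ‖d‖ := real_inner_le_norm _ _
        _ ≤ L * ‖(x + t • d) - x‖ * ‖d‖ := by gcongr; exact hlip _ _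
        _ = L * t * ‖d‖ ^ 2 := by
          rw [add_sub_cancel_left, norm_smul, Real.norm_of_nonneg ht.1.le]; ring
    rw [(hderiv t).deriv, ← inner_sub_left]
    linarith
  have hψ0 : ψ 0 = g x := by simp [ψ]
  have hψ1 : ψ 1 = g y - ⟪gradient g x, y - x⟫ - L / 2 * ‖y - x‖ ^ 2 := by simp [ψ, d]
  have := hanti (Set.left_mem_Icc.mpr zero_le_one) (Set.right_mem_Icc.mpr zero_le_one) zero_le_one
  linarith

theorem inertial_step_estimate {F g : E → ℝ} {σ L : ℝ}
    (hconv : ConvexOn ℝ Set.univ fun z => F z - σ / 2 * ‖z‖ ^ 2)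
    (hg : Differentiable ℝ g) (hlip : ∀ z w, ‖gradient g z - gradient g w‖ ≤ L * ‖z - w‖)
    {p q r : E} (hF : DifferentiableAt ℝ F q) {a b μ s t : ℝ} (ha : 0 ≤ a) (hb : 0 ≤ b) (hμ : 0 < μ)
    (hstep : F p - F q - ⟪gradient F q, p - q⟫ + a * ⟪p, gradient g q⟫ + b * ⟪p, r - q⟫ + a * s
      ≤ F q - F q - ⟪gradient F q, q - q⟫ + a * ⟪q, gradient g q⟫ + b * ⟪q, r - q⟫ + a * t) :
    a * (s + g p) + (σ - a * L - b * μ) / 2 * ‖p - q‖ ^ 2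
      ≤ a * (t + g q) + b / (2 * μ) * ‖q - r‖ ^ 2 := by
  have hbregman := add_inner_gradient_add_sq_norm_le hconv hF p
  have hdescent := mul_le_mul_of_nonneg_left (le_add_inner_gradient_add_sq_norm hg hlip q p) ha
  have hyoung := mul_le_mul_of_nonneg_left (real_inner_le_young hμ (p - q) (q - r)) hb
  have hgrad : ⟪p, gradient g q⟫ - ⟪q, gradient g q⟫ = ⟪gradient g q, p - q⟫ := by
    rw [← inner_sub_left, real_inner_comm]
  have hinertia : ⟪p, r - q⟫ - ⟪q, r - q⟫ = -⟪p - q, q - r⟫ := by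
    rw [← inner_sub_left, ← inner_neg_right, neg_sub]
  simp only [sub_self, inner_zero_right] at hstep
  linear_combination hstep + hbregman + hdescent + hyoung - a * hgrad - b * hinertia

end InnerProduct

theorem mul_descent_coeff_le {σ L αlo αhi β μ a b : ℝ} (hσ : 0 ≤ σ) (hαlo : 0 < αlo)
    (hlo : αlo ≤ a) (hhi : a ≤ αhi) (hβ : 0 ≤ β) (hb : b ≤ β) (hμ : 0 ≤ μ) :
    a * ((σ - αhi * L) / (2 * αhi) - μ * β / (2 * αlo)) ≤ (σ - a * L - b * μ) / 2 := by
  have ha : 0 < a := hαlo.trans_le hlo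
  have hαhi : 0 < αhi := ha.trans_le hhi
  have hσ_part : a * ((σ - αhi * L) / (2 * αhi)) ≤ (σ - a * L) / 2 := by
    rw [mul_div_assoc', div_le_div_iff₀ (by positivity) two_pos]
    nlinarith
  have hβ_part : b * μ / 2 ≤ a * (μ * β / (2 * αlo)) := by
    rw [mul_div_assoc', div_le_div_iff₀ two_pos (by positivity)]
    nlinarith [mul_nonneg hμ hβ, mul_le_mul_of_nonneg_right hb hμ]
  linarith

theorem inertial_coeff_le_mul {αlo β μ a b : ℝ} (hαlo : 0 < αlo) (hlo : αlo ≤ a) (hβ : 0 ≤ β)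
    (hb : b ≤ β) (hμ : 0 < μ) :
    b / (2 * μ) ≤ a * (β / (2 * μ * αlo)) := by
  rw [mul_div_assoc', div_le_div_iff₀ (by positivity) (by positivity)]
  nlinarith [mul_le_mul_of_nonneg_right hlo hβ, mul_le_mul_of_nonneg_right hb hαlo.le]

theorem EReal.add_coe_le_add_coe_of_forall_real {y z : EReal} (hy : y ≠ ⊥) (hz : z ≠ ⊥)
    {a c c' u v : ℝ} (ha : 0 < a) (h : (c : EReal) + a * y ≤ c' + a * z)
    (hreal : ∀ s t : ℝ, c + a * s ≤ c' + a * t → s + u ≤ t + v) :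
    y + u ≤ z + v := by
  induction z using EReal.rec with
  | bot => exact absurd rfl hz
  | top => simp
  | coe t =>
    induction y using EReal.rec with
    | bot => exact absurd rfl hy
    | top =>
      rw [EReal.mul_top_of_pos (by exact_mod_cast ha), EReal.coe_add_top, top_le_iff] at h
      exact absurd h (by exact_mod_cast EReal.coe_ne_top _)
    | coe s => exact_mod_cast hreal s t (by exact_mod_cast h)

theorem stmt10_general
    (m : ℕ)
    (f : EuclideanSpace ℝ (Fin m) → EReal)
    -- `f` is proper (never `⊥`, somewhere finite), lower semicontinuous and bounded below
    (hfbot : ∀ z, f z ≠ ⊥)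
    -- `g` is differentiable with `Lg`-Lipschitz gradient
    (g : EuclideanSpace ℝ (Fin m) → ℝ) (Lg : ℝ)
    (hgdiff : Differentiable ℝ g)
    (hglip : ∀ z w, ‖gradient g z - gradient g w‖ ≤ Lg * ‖z - w‖)
    -- `F` is `σ`-strongly convex and differentiable with `LF`-Lipschitz gradient
    (F : EuclideanSpace ℝ (Fin m) → ℝ) (σ : ℝ) (hσ : 0 < σ)
    (hFconv : ConvexOn ℝ Set.univ fun z => F z - σ / 2 * ‖z‖ ^ 2)
    (hFdiff : Differentiable ℝ F)
    -- parameters of the algorithm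
    (αlo αhi β : ℝ) (hαlo : 0 < αlo) (hβ : 0 ≤ β)
    (α βs : ℕ → ℝ)
    (hα : ∀ n, 1 ≤ n → αlo ≤ α n ∧ α n ≤ αhi)
    (hβs : ∀ n, 1 ≤ n → 0 ≤ βs n ∧ βs n ≤ β)
    -- the sequence generated by Algorithm 1:
    -- `x (n+1)` minimizes `u ↦ D_F(u, x n) + α n • ⟪u, ∇g(x n)⟫ + βs n • ⟪u, x (n-1) - x n⟫ + α n • f u`
    (x : ℕ → EuclideanSpace ℝ (Fin m))
    (halg : ∀ n, 1 ≤ n → ∀ u,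
      ((F (x (n + 1)) - F (x n) - ⟪gradient F (x n), x (n + 1) - x n⟫
          + α n * ⟪x (n + 1), gradient g (x n)⟫
          + βs n * ⟪x (n + 1), x (n - 1) - x n⟫ : ℝ) : EReal)
        + (α n : EReal) * f (x (n + 1))
      ≤ ((F u - F (x n) - ⟪gradient F (x n), u - x n⟫
          + α n * ⟪u, gradient g (x n)⟫
          + βs n * ⟪u, x (n - 1) - x n⟫ : ℝ) : EReal)
        + (α n : EReal) * f u)
    -- the parameters `μ, αlo, β` satisfy `μ(σ - Lg·αlo) > β(μ² + 1)` and `αhi` is chosen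
    -- with `αlo < αhi` such that `M1 > M2`
    (μ : ℝ) (hμ : 0 < μ)
    (M1 M2 : ℝ)
    (hM1 : M1 = (σ - αhi * Lg) / (2 * αhi) - μ * β / (2 * αlo))
    (hM2 : M2 = β / (2 * μ * αlo))
    (hM : M2 < M1)
    :
    0 < M1 - M2 ∧
    ∀ n, 1 ≤ n →
      f (x (n + 1)) + ((g (x (n + 1)) + M2 * ‖x (n + 1) - x n‖ ^ 2
          + (M1 - M2) * ‖x (n + 1) - x n‖ ^ 2 : ℝ) : EReal)
      ≤ f (x n) + ((g (x n) + M2 * ‖x n - x (n - 1)‖ ^ 2 : ℝ) : EReal) := by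
  refine ⟨sub_pos.mpr hM, fun n hn => ?_⟩
  obtain ⟨hα_lo, hα_hi⟩ := hα n hn
  obtain ⟨hβs_nonneg, hβs_le⟩ := hβs n hn
  have ha : 0 < α n := hαlo.trans_le hα_lo
  have hM1_le : α n * M1 ≤ (σ - α n * Lg - βs n * μ) / 2 :=
    hM1 ▸ mul_descent_coeff_le hσ.le hαlo hα_lo hα_hi hβ hβs_le hμ.le
  have hM2_ge : βs n / (2 * μ) ≤ α n * M2 :=
    hM2 ▸ inertial_coeff_le_mul hαlo hα_lo hβ hβs_le hμ
  refine EReal.add_coe_le_add_coe_of_forall_real (hfbot _) (hfbot _) ha (halg n hn (x n))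
    fun s t hst => ?_
  have hest := inertial_step_estimate hFconv hgdiff hglip (hFdiff _) ha.le hβs_nonneg hμ hst
  refine le_of_mul_le_mul_left ?_ ha
  nlinarith [mul_le_mul_of_nonneg_right hM1_le (sq_nonneg ‖x (n + 1) - x n‖),
    mul_le_mul_of_nonneg_right hM2_ge (sq_nonneg ‖x n - x (n - 1)‖)]

/-- Lemma 3.5 (H1): with `M = M1 - M2 > 0` and `H(x,y) = (f+g)(x) + M2‖x-y‖²`, one has
`H(x_{n+1}, x_n) + M‖x_{n+1} - x_n‖² ≤ H(x_n, x_{n-1})` for all `n ≥ 1`. -/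
theorem stmt10
    (m : ℕ)
    (f : EuclideanSpace ℝ (Fin m) → EReal)
    -- `f` is proper (never `⊥`, somewhere finite), lower semicontinuous and bounded below
    (hfbot : ∀ z, f z ≠ ⊥) (hfproper : ∃ z, f z ≠ ⊤)
    (hflsc : LowerSemicontinuous f)
    (hfbdd : ∃ cl : ℝ, ∀ z, (cl : EReal) ≤ f z)
    -- `g` is differentiable with `Lg`-Lipschitz gradient
    (g : EuclideanSpace ℝ (Fin m) → ℝ) (Lg : ℝ) (hLg : 0 ≤ Lg)
    (hgdiff : Differentiable ℝ g)
    (hglip : ∀ z w, ‖gradient g z - gradient g w‖ ≤ Lg * ‖z - w‖)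
    -- `F` is `σ`-strongly convex and differentiable with `LF`-Lipschitz gradient
    (F : EuclideanSpace ℝ (Fin m) → ℝ) (σ LF : ℝ) (hσ : 0 < σ) (hLF : 0 < LF)
    (hFconv : ConvexOn ℝ Set.univ fun z => F z - σ / 2 * ‖z‖ ^ 2)
    (hFdiff : Differentiable ℝ F)
    (hFlip : ∀ z w, ‖gradient F z - gradient F w‖ ≤ LF * ‖z - w‖)
    -- parameters of the algorithm
    (αlo αhi β : ℝ) (hαlo : 0 < αlo) (hαorder : αlo ≤ αhi) (hβ : 0 ≤ β)
    (α βs : ℕ → ℝ)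
    (hα : ∀ n, 1 ≤ n → αlo ≤ α n ∧ α n ≤ αhi)
    (hβs : ∀ n, 1 ≤ n → 0 ≤ βs n ∧ βs n ≤ β)
    -- the sequence generated by Algorithm 1:
    -- `x (n+1)` minimizes `u ↦ D_F(u, x n) + α n • ⟪u, ∇g(x n)⟫ + βs n • ⟪u, x (n-1) - x n⟫ + α n • f u`
    (x : ℕ → EuclideanSpace ℝ (Fin m))
    (halg : ∀ n, 1 ≤ n → ∀ u,
      ((F (x (n + 1)) - F (x n) - ⟪gradient F (x n), x (n + 1) - x n⟫
          + α n * ⟪x (n + 1), gradient g (x n)⟫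
          + βs n * ⟪x (n + 1), x (n - 1) - x n⟫ : ℝ) : EReal)
        + (α n : EReal) * f (x (n + 1))
      ≤ ((F u - F (x n) - ⟪gradient F (x n), u - x n⟫
          + α n * ⟪u, gradient g (x n)⟫
          + βs n * ⟪u, x (n - 1) - x n⟫ : ℝ) : EReal)
        + (α n : EReal) * f u)
    -- the parameters `μ, αlo, β` satisfy `μ(σ - Lg·αlo) > β(μ² + 1)` and `αhi` is chosen
    -- with `αlo < αhi` such that `M1 > M2`
    (μ : ℝ) (hμ : 0 < μ)
    (hcond : β * (μ ^ 2 + 1) < μ * (σ - Lg * αlo))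
    (M1 M2 : ℝ)
    (hM1 : M1 = (σ - αhi * Lg) / (2 * αhi) - μ * β / (2 * αlo))
    (hM2 : M2 = β / (2 * μ * αlo))
    (hαstrict : αlo < αhi) (hM : M2 < M1)

    -- `f + g` is coercive
    (hcoer : Tendsto (fun z => f z + ((g z : ℝ) : EReal))
      (comap (fun z : EuclideanSpace ℝ (Fin m) => ‖z‖) atTop) (𝓝 ⊤))
    :
    0 < M1 - M2 ∧
    ∀ n, 1 ≤ n →
      f (x (n + 1)) + ((g (x (n + 1)) + M2 * ‖x (n + 1) - x n‖ ^ 2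
          + (M1 - M2) * ‖x (n + 1) - x n‖ ^ 2 : ℝ) : EReal)
      ≤ f (x n) + ((g (x n) + M2 * ‖x n - x (n - 1)‖ ^ 2 : ℝ) : EReal) :=
  stmt10_general m f hfbot g Lg hgdiff hglip F σ hσ hFconv hFdiff αlo αhi β hαlo hβ α βs hα hβs x
    halg μ hμ M1 M2 hM1 hM2 hM
end
end

section
/- In the setting of Problem 1, choose μ > 0, α̲ > 0 and β ≥ 0 satisfying μ(σ − L_{∇g}α̲) > β(μ² + 1), define M_1 = (σ − ᾱL_{∇g})/(2ᾱ) − μβ/(2α̲) and M_2 = β/(2μα̲), choose ᾱ > α̲ such that M_1 > M_2, assume f + g is coercive, and let (x_n)_{n∈ℕ} be a sequence generated by Algorithm 1. Define H : ℝ^m × ℝ^m → (−∞,+∞] by H(x,y) = (f+g)(x) + M_2‖x−y‖². Then: if (x_{n_k})_{k∈ℕ} is any subsequence converging to some x ∈ ℝ^m, one has H(x_{n_k}, x_{n_k−1}) → H(x,x) as k → +∞; moreover, at least one such convergent subsequence exists. -/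
open Filter Topology RealInnerProductSpace

noncomputable section

variable {E : Type*} [NormedAddCommGroup E] [InnerProductSpace ℝ E]

/-!
Strong convexity of `F`, the descent lemma for `g` and Young's inequality with weight `μ` show
that along the iterates the Lyapunov value `H(x_{n+1}, x_n)` drops below `H(x_n, x_{n-1})` by at
least `(M1 - M2) ‖x_{n+1} - x_n‖²`. Coercivity of `f + g` then bounds the iterates, so `H` is
bounded below, the increments are square-summable, and `x_{n_k - 1}`, `x_{n_k - 2}` converge
together with `x_{n_k}`. Lower semicontinuity gives `liminf f(x_{n_k}) ≥ f(x)`; comparing the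
subproblem value at its minimiser `x_{n_k}` with its value at `x` gives the matching `limsup`.
A convergent subsequence exists by Bolzano–Weierstrass.
-/
section Calculus

variable [CompleteSpace E]

def bregmanDiv (F : E → ℝ) (u y : E) : ℝ :=
  F u - F y - ⟪gradient F y, u - y⟫

theorem hasDerivAt_comp_add_smul {F : E → ℝ} {y v : E} {t : ℝ}
    (hF : DifferentiableAt ℝ F (y + t • v)) :
    HasDerivAt (fun s : ℝ => F (y + s • v)) ⟪gradient F (y + t • v), v⟫ t := by
  have hline : HasDerivAt (fun s : ℝ => y + s • v) v t := by
    simpa using ((hasDerivAt_id t).smul_const v).const_add y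
  simpa [Function.comp_def] using hF.hasGradientAt.hasFDerivAt.comp_hasDerivAt t hline

theorem StrongConvexOn.half_mul_sq_norm_sub_le_bregmanDiv {F : E → ℝ} {σ : ℝ}
    (hF : StrongConvexOn Set.univ σ F) {y : E} (hFy : DifferentiableAt ℝ F y) (u : E) :
    σ / 2 * ‖u - y‖ ^ 2 ≤ bregmanDiv F u y := by
  set v := u - y
  have hconv : ConvexOn ℝ Set.univ fun t : ℝ => F (y + t • v) - σ / 2 * ‖y + t • v‖ ^ 2 := by
    have := (strongConvexOn_iff_convex.1 hF).comp_affineMap (AffineMap.lineMap y u)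
    simpa [Function.comp_def, AffineMap.lineMap_apply, add_comm, v] using this
  have hderiv : HasDerivAt (fun t : ℝ => F (y + t • v) - σ / 2 * ‖y + t • v‖ ^ 2)
      (⟪gradient F y, v⟫ - σ / 2 * (2 * ⟪y, v⟫)) 0 := by
    have hline : HasDerivAt (fun t : ℝ => y + t • v) v 0 := by
      simpa using ((hasDerivAt_id (0 : ℝ)).smul_const v).const_add y
    have h := (hasDerivAt_comp_add_smul (y := y) (v := v) (t := 0) (by simpa using hFy)).sub
      (hline.norm_sq.const_mul (σ / 2))
    simp only [zero_smul, add_zero] at h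
    exact h
  have hslope := hconv.le_slope_of_hasDerivAt (Set.mem_univ 0) (Set.mem_univ 1) one_pos hderiv
  have hu : y + v = u := by simp [v]
  simp only [slope_def_field, one_smul, zero_smul, add_zero, hu, sub_zero, div_one] at hslope
  have hnorm : ‖u‖ ^ 2 = ‖y‖ ^ 2 + 2 * ⟪y, v⟫ + ‖v‖ ^ 2 := by
    rw [← hu, norm_add_sq_real]
  rw [hnorm] at hslope
  show σ / 2 * ‖v‖ ^ 2 ≤ F u - F y - ⟪gradient F y, v⟫
  linarith

theorem le_add_inner_gradient_add_sq {g : E → ℝ} {L : ℝ} (hg : Differentiable ℝ g) {y : E}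
    (hL : ∀ z, ‖gradient g z - gradient g y‖ ≤ L * ‖z - y‖) (u : E) :
    g u ≤ g y + ⟪gradient g y, u - y⟫ + L / 2 * ‖u - y‖ ^ 2 := by
  set v := u - y
  set ψ : ℝ → ℝ := fun t => g (y + t • v) - t * ⟪gradient g y, v⟫ - L / 2 * t ^ 2 * ‖v‖ ^ 2
  have hderiv : ∀ t, HasDerivAt ψ
      (⟪gradient g (y + t • v), v⟫ - ⟪gradient g y, v⟫ - L * t * ‖v‖ ^ 2) t := by
    intro t
    have := ((hasDerivAt_comp_add_smul (y := y) (v := v) (hg _)).sub ((hasDerivAt_id t).mul_const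
      ⟪gradient g y, v⟫)).sub (((hasDerivAt_pow 2 t).const_mul (L / 2)).mul_const (‖v‖ ^ 2))
    refine this.congr_deriv ?_
    simp only [one_mul, Nat.cast_ofNat, pow_one, Nat.add_one_sub_one]
    ring
  have hanti : AntitoneOn ψ (Set.Ici 0) := by
    refine antitoneOn_of_hasDerivWithinAt_nonpos (convex_Ici 0)
      (fun t _ => (hderiv t).continuousAt.continuousWithinAt)
      (fun t _ => (hderiv t).hasDerivWithinAt) fun t ht => ?_
    have ht : 0 < t := by simpa using ht
    have hlip : ‖gradient g (y + t • v) - gradient g y‖ ≤ L * (t * ‖v‖) := by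
      simpa [norm_smul, abs_of_pos ht] using hL (y + t • v)
    have := real_inner_le_norm (gradient g (y + t • v) - gradient g y) v
    rw [inner_sub_left] at this
    nlinarith [mul_le_mul_of_nonneg_right hlip (norm_nonneg v)]
  have h := hanti (Set.mem_Ici.2 le_rfl) (Set.mem_Ici.2 zero_le_one) zero_le_one
  have hu : y + v = u := by simp [v]
  simp only [ψ, one_smul, zero_smul, add_zero, hu] at h
  linarith

end Calculus

theorem EReal.ne_top_and_toReal_le_of_isMinOn {α : Type*} {h : α → ℝ} {f : α → EReal} {a : ℝ}
    {z u : α} (ha : 0 < a) (hf : ∀ w, f w ≠ ⊥)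
    (hz : IsMinOn (fun w => (h w : EReal) + a * f w) Set.univ z) (hu : f u ≠ ⊤) :
    f z ≠ ⊤ ∧ h z + a * (f z).toReal ≤ h u + a * (f u).toReal := by
  have hle := isMinOn_univ_iff.1 hz u
  lift f u to ℝ using ⟨hu, hf u⟩ with r
  have hfz : f z ≠ ⊤ := by
    intro htop
    rw [htop, EReal.coe_mul_top_of_pos ha, EReal.coe_add_top, top_le_iff] at hle
    exact EReal.coe_ne_top _ (by exact_mod_cast hle)
  refine ⟨hfz, ?_⟩
  lift f z to ℝ using ⟨hfz, hf z⟩ with s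
  exact_mod_cast hle

theorem le_add_mul_sq_of_weighted_le {σ L μ αlo αhi β a b s t P Q : ℝ} (hσ : 0 ≤ σ) (hμ : 0 < μ)
    (hαlo : 0 < αlo) (ha : αlo ≤ a ∧ a ≤ αhi) (hb : 0 ≤ b ∧ b ≤ β) (hs : 0 ≤ s) (ht : 0 ≤ t)
    (h : a * P + (σ - a * L) / 2 * s ^ 2 ≤ a * Q + b * (s * t)) :
    P + ((σ - αhi * L) / (2 * αhi) - μ * β / (2 * αlo)) * s ^ 2
      ≤ Q + β / (2 * μ * αlo) * t ^ 2 := by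
  obtain ⟨hαa, haα⟩ := ha
  have ha0 : 0 < a := hαlo.trans_le hαa
  have hβ : 0 ≤ β := hb.1.trans hb.2
  have young : b * (s * t) ≤ μ * β / 2 * s ^ 2 + β / (2 * μ) * t ^ 2 := by
    have hsq : 0 ≤ β / (2 * μ) * (μ * s - t) ^ 2 := by positivity
    have hexp : β / (2 * μ) * (μ * s - t) ^ 2
        = μ * β / 2 * s ^ 2 + β / (2 * μ) * t ^ 2 - β * (s * t) := by
      field_simp; ring
    nlinarith [mul_le_mul_of_nonneg_right hb.2 (mul_nonneg hs ht)]
  have c1 : a * ((σ - αhi * L) / (2 * αhi)) ≤ (σ - a * L) / 2 := by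
    rw [← mul_div_assoc, div_le_div_iff₀ (by linarith) two_pos]
    nlinarith [mul_le_mul_of_nonneg_left haα hσ]
  have c2 : μ * β / 2 ≤ a * (μ * β / (2 * αlo)) := by
    rw [← mul_div_assoc, le_div_iff₀ (by positivity)]
    nlinarith [mul_le_mul_of_nonneg_left hαa (mul_nonneg hμ.le hβ)]
  have c3 : β / (2 * μ) ≤ a * (β / (2 * μ * αlo)) := by
    rw [← mul_div_assoc, div_le_div_iff₀ (by positivity) (by positivity)]
    nlinarith [mul_le_mul_of_nonneg_left hαa (mul_nonneg hμ.le hβ)]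
  refine le_of_mul_le_mul_left ?_ ha0
  nlinarith [mul_le_mul_of_nonneg_right c1 (sq_nonneg s),
    mul_le_mul_of_nonneg_right c2 (sq_nonneg s), mul_le_mul_of_nonneg_right c3 (sq_nonneg t)]

theorem continuous_of_norm_sub_le_mul {G H : Type*} [SeminormedAddCommGroup G]
    [SeminormedAddCommGroup H] {φ : G → H} {L : ℝ} (h : ∀ z w, ‖φ z - φ w‖ ≤ L * ‖z - w‖) :
    Continuous φ :=
  (LipschitzWith.of_dist_le' fun z w => by simpa only [dist_eq_norm] using h z w).continuous

theorem summable_of_succ_add_mul_le {H d : ℕ → ℝ} {c C : ℝ} (hc : 0 < c) (hd : ∀ n, 0 ≤ d n)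
    (h : ∀ n, H (n + 1) + c * d n ≤ H n) (hC : ∀ n, C ≤ H n) : Summable d := by
  refine summable_of_sum_range_le hd (c := (H 0 - C) / c) fun N => ?_
  have htel : ∀ N, c * ∑ i ∈ Finset.range N, d i ≤ H 0 - H N := by
    intro N
    induction N with
    | zero => simp
    | succ N ih => rw [Finset.sum_range_succ, mul_add]; linarith [h N]
  rw [le_div_iff₀' hc]
  linarith [htel N, hC N]

theorem isBounded_range_of_forall_le {α : Type*} [Bornology α] {φ : α → EReal}
    (hφ : Tendsto φ (Bornology.cobounded α) (𝓝 ⊤)) {x : ℕ → α} {N : ℕ} {C : ℝ}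
    (hC : ∀ n, N ≤ n → φ (x n) ≤ C) : Bornology.IsBounded (Set.range x) := by
  have hsub : Bornology.IsBounded {z | φ z ≤ C} := by
    rw [Bornology.isBounded_def]
    exact (hφ.eventually (eventually_gt_nhds (EReal.coe_lt_top C))).mono fun _ => not_le.2
  refine (hsub.union ((Set.finite_lt_nat N).image x).isBounded).subset ?_
  rintro _ ⟨n, rfl⟩
  by_cases hn : N ≤ n
  · exact Or.inl (hC n hn)
  · exact Or.inr ⟨n, not_le.1 hn, rfl⟩

theorem tendsto_comp_sub_one_of_tendsto_succ_sub {G ι : Type*} [AddCommGroup G]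
    [TopologicalSpace G] [IsTopologicalAddGroup G] {x : ℕ → G}
    (hx : Tendsto (fun n => x (n + 1) - x n) atTop (𝓝 0)) {l : Filter ι} {φ : ι → ℕ}
    (hφ : Tendsto φ l atTop) {a : G} (hxφ : Tendsto (fun k => x (φ k)) l (𝓝 a)) :
    Tendsto (fun k => x (φ k - 1)) l (𝓝 a) := by
  have h := hxφ.sub (hx.comp ((tendsto_sub_atTop_nat 1).comp hφ))
  rw [sub_zero] at h
  refine h.congr' ?_
  filter_upwards [hφ.eventually_ge_atTop 1] with k hk
  simp [Nat.sub_add_cancel hk]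

theorem LowerSemicontinuousAt.tendsto_comp_of_eventually_le {X β ι : Type*} [TopologicalSpace X]
    [LinearOrder β] [TopologicalSpace β] [OrderTopology β] {f : X → β} {a : X}
    (hf : LowerSemicontinuousAt f a) {l : Filter ι} {y : ι → X} {u : ι → β}
    (hy : Tendsto y l (𝓝 a)) (hu : Tendsto u l (𝓝 (f a))) (hle : ∀ᶠ i in l, f (y i) ≤ u i) :
    Tendsto (fun i => f (y i)) l (𝓝 (f a)) :=
  tendsto_order.2 ⟨fun b hb => hy.eventually (hf b hb), fun _ hb =>
    (hle.and (hu.eventually (eventually_lt_nhds hb))).mono fun _ hi => hi.1.trans_lt hi.2⟩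

section Lyapunov

variable {G : Type*} [NormedAddCommGroup G]

-- `H(x_n, x_{n-1})`; the `toReal` is meaningful only where `f (x n) ≠ ⊤`, i.e. for `n ≥ 2`.
def inertialLyapunov (f : G → EReal) (g : G → ℝ) (c : ℝ) (x : ℕ → G) (n : ℕ) : ℝ :=
  (f (x n)).toReal + g (x n) + c * ‖x n - x (n - 1)‖ ^ 2

variable {f : G → EReal} {g : G → ℝ} {x : ℕ → G} {c d : ℝ}

theorem isBounded_range_of_inertialLyapunov
    (hcoer : Tendsto (fun z => f z + (g z : EReal)) (Bornology.cobounded G) (𝓝 ⊤))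
    (hf : ∀ z, f z ≠ ⊥) (hfin : ∀ n, 2 ≤ n → f (x n) ≠ ⊤) (hc : 0 ≤ c) (hd : 0 ≤ d)
    (hV : ∀ n, 2 ≤ n →
      inertialLyapunov f g c x (n + 1) + d * ‖x (n + 1) - x n‖ ^ 2 ≤ inertialLyapunov f g c x n) :
    Bornology.IsBounded (Set.range x) := by
  have hle : ∀ n, 2 ≤ n → inertialLyapunov f g c x n ≤ inertialLyapunov f g c x 2 := by
    intro n hn
    induction n, hn using Nat.le_induction with
    | base => exact le_rfl
    | succ n hn ih => nlinarith [hV n hn, sq_nonneg ‖x (n + 1) - x n‖]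
  refine isBounded_range_of_forall_le hcoer (N := 2) (C := inertialLyapunov f g c x 2)
    fun n hn => ?_
  rw [← EReal.coe_toReal (hfin n hn) (hf _), ← EReal.coe_add, EReal.coe_le_coe_iff]
  have := hle n hn
  have : 0 ≤ c * ‖x n - x (n - 1)‖ ^ 2 := by positivity
  simp only [inertialLyapunov] at *
  linarith

theorem tendsto_succ_sub_of_inertialLyapunov [ProperSpace G]
    (hbdd : Bornology.IsBounded (Set.range x)) (hg : Continuous g)
    (hfb : ∃ C : ℝ, ∀ z, (C : EReal) ≤ f z)
    (hfin : ∀ n, 2 ≤ n → f (x n) ≠ ⊤) (hc : 0 ≤ c) (hd : 0 < d)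
    (hV : ∀ n, 2 ≤ n →
      inertialLyapunov f g c x (n + 1) + d * ‖x (n + 1) - x n‖ ^ 2 ≤ inertialLyapunov f g c x n) :
    Tendsto (fun n => x (n + 1) - x n) atTop (𝓝 0) := by
  obtain ⟨C, hC⟩ := hfb
  obtain ⟨m, hm⟩ := hbdd.isCompact_closure.bddBelow_image hg.continuousOn
  have hlow : ∀ n, 2 ≤ n → C + m ≤ inertialLyapunov f g c x n := by
    intro n hn
    have hfC := hC (x n)
    rw [← EReal.coe_toReal (hfin n hn) (ne_bot_of_le_ne_bot (EReal.coe_ne_bot C) hfC),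
      EReal.coe_le_coe_iff] at hfC
    have hgm : m ≤ g (x n) := hm ⟨x n, subset_closure (Set.mem_range_self n), rfl⟩
    have : 0 ≤ c * ‖x n - x (n - 1)‖ ^ 2 := by positivity
    simp only [inertialLyapunov]
    linarith
  have hsum : Summable fun n => ‖x (n + 3) - x (n + 2)‖ ^ 2 :=
    summable_of_succ_add_mul_le (H := fun n => inertialLyapunov f g c x (n + 2)) hd
      (fun n => sq_nonneg _) (fun n => hV (n + 2) (by omega)) (fun n => hlow (n + 2) (by omega))
  have h := hsum.tendsto_atTop_zero.sqrt
  simp only [Real.sqrt_sq (norm_nonneg _), Real.sqrt_zero] at h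
  exact (tendsto_add_atTop_iff_nat 2).1 (tendsto_zero_iff_norm_tendsto_zero.2 h)

end Lyapunov

section Algorithm

variable [CompleteSpace E]

-- The real part of the objective of the subproblem defining `x_{n+1}`, with `y = x_n`,
-- `y' = x_{n-1}`, `a = α_n`, `b = β_n`.
def inertialBregmanModel (g F : E → ℝ) (a b : ℝ) (y y' u : E) : ℝ :=
  bregmanDiv F u y + a * ⟪u, gradient g y⟫ + b * ⟪u, y' - y⟫

def IsInertialBregmanSeq (f : E → EReal) (g F : E → ℝ) (α β : ℕ → ℝ) (x : ℕ → E) : Prop :=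
  ∀ n, 1 ≤ n → IsMinOn
    (fun u => (inertialBregmanModel g F (α n) (β n) (x n) (x (n - 1)) u : EReal) + α n * f u)
    Set.univ (x (n + 1))

theorem inertialBregmanModel_sub_le {g F : E → ℝ} {a b A B : ℝ} (ha : |a| ≤ A) (hb : |b| ≤ B)
    (y y' u z : E) :
    inertialBregmanModel g F a b y y' u - inertialBregmanModel g F a b y y' z
      ≤ |F u - F z - ⟪gradient F y, u - z⟫| + A * |⟪u - z, gradient g y⟫|
        + B * |⟪u - z, y' - y⟫| := by
  have hexp : inertialBregmanModel g F a b y y' u - inertialBregmanModel g F a b y y' z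
      = (F u - F z - ⟪gradient F y, u - z⟫) + a * ⟪u - z, gradient g y⟫
        + b * ⟪u - z, y' - y⟫ := by
    simp only [inertialBregmanModel, bregmanDiv, inner_sub_left, inner_sub_right]
    ring
  have hA : a * ⟪u - z, gradient g y⟫ ≤ A * |⟪u - z, gradient g y⟫| :=
    (le_abs_self _).trans (abs_mul a _ ▸ mul_le_mul_of_nonneg_right ha (abs_nonneg _))
  have hB : b * ⟪u - z, y' - y⟫ ≤ B * |⟪u - z, y' - y⟫| :=
    (le_abs_self _).trans (abs_mul b _ ▸ mul_le_mul_of_nonneg_right hb (abs_nonneg _))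
  rw [hexp]
  linarith [le_abs_self (F u - F z - ⟪gradient F y, u - z⟫)]

variable {f : E → EReal} {g F : E → ℝ} {α βs : ℕ → ℝ} {x : ℕ → E}

theorem IsInertialBregmanSeq.ne_top (hx : IsInertialBregmanSeq f g F α βs x)
    (hf : ∀ z, f z ≠ ⊥) (hfp : ∃ z, f z ≠ ⊤) (hα : ∀ n, 1 ≤ n → 0 < α n) {n : ℕ}
    (hn : 2 ≤ n) : f (x n) ≠ ⊤ := by
  obtain ⟨z, hz⟩ := hfp
  obtain ⟨m, rfl⟩ : ∃ m, n = m + 1 := ⟨n - 1, by omega⟩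
  exact (EReal.ne_top_and_toReal_le_of_isMinOn (hα m (by omega)) hf (hx m (by omega)) hz).1

theorem IsInertialBregmanSeq.inertialLyapunov_succ_add_le {σ L μ αlo αhi β M₁ M₂ : ℝ} {n : ℕ}
    (hx : IsInertialBregmanSeq f g F α βs x) (hn : 1 ≤ n) (hf : ∀ z, f z ≠ ⊥)
    (hfx : f (x n) ≠ ⊤) (hF : StrongConvexOn Set.univ σ F) (hFd : DifferentiableAt ℝ F (x n))
    (hg : Differentiable ℝ g) (hgL : ∀ z, ‖gradient g z - gradient g (x n)‖ ≤ L * ‖z - x n‖)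
    (hσ : 0 ≤ σ) (hμ : 0 < μ) (hαlo : 0 < αlo) (hα : αlo ≤ α n ∧ α n ≤ αhi)
    (hβ : 0 ≤ βs n ∧ βs n ≤ β) (hM₁ : M₁ = (σ - αhi * L) / (2 * αhi) - μ * β / (2 * αlo))
    (hM₂ : M₂ = β / (2 * μ * αlo)) :
    inertialLyapunov f g M₂ x (n + 1) + (M₁ - M₂) * ‖x (n + 1) - x n‖ ^ 2
      ≤ inertialLyapunov f g M₂ x n := by
  suffices h : (f (x (n + 1))).toReal + g (x (n + 1)) + M₁ * ‖x (n + 1) - x n‖ ^ 2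
      ≤ (f (x n)).toReal + g (x n) + M₂ * ‖x n - x (n - 1)‖ ^ 2 by
    simp only [inertialLyapunov, Nat.add_sub_cancel]
    linarith
  subst hM₁ hM₂
  have ha : 0 < α n := hαlo.trans_le hα.1
  obtain ⟨-, hstep⟩ := EReal.ne_top_and_toReal_le_of_isMinOn ha hf (hx n hn) hfx
  have hD := hF.half_mul_sq_norm_sub_le_bregmanDiv hFd (x (n + 1))
  have hgu := le_add_inner_gradient_add_sq hg hgL (x (n + 1))
  have hCS : -⟪x (n + 1) - x n, x (n - 1) - x n⟫ ≤ ‖x (n + 1) - x n‖ * ‖x n - x (n - 1)‖ := by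
    rw [← inner_neg_right, neg_sub]
    exact real_inner_le_norm _ _
  refine le_add_mul_sq_of_weighted_le hσ hμ hαlo hα hβ (norm_nonneg _) (norm_nonneg _) ?_
  have e1 : ⟪x (n + 1), gradient g (x n)⟫
      = ⟪x n, gradient g (x n)⟫ + ⟪gradient g (x n), x (n + 1) - x n⟫ := by
    rw [real_inner_comm (x (n + 1) - x n), inner_sub_left]; ring
  have e2 : ⟪x (n + 1), x (n - 1) - x n⟫
      = ⟪x n, x (n - 1) - x n⟫ + ⟪x (n + 1) - x n, x (n - 1) - x n⟫ := by
    rw [inner_sub_left]; ring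
  simp only [inertialBregmanModel, bregmanDiv, sub_self, inner_zero_right, e1, e2] at hstep hD
  nlinarith [mul_le_mul_of_nonneg_left hgu ha.le, mul_le_mul_of_nonneg_left hCS hβ.1]

theorem IsInertialBregmanSeq.apply_succ_le {αlo αhi β : ℝ} {n : ℕ} {u : E}
    (hx : IsInertialBregmanSeq f g F α βs x) (hn : 1 ≤ n) (hf : ∀ z, f z ≠ ⊥) (hu : f u ≠ ⊤)
    (hαlo : 0 < αlo) (hα : αlo ≤ α n ∧ α n ≤ αhi) (hβ : 0 ≤ βs n ∧ βs n ≤ β) :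
    f (x (n + 1)) ≤ (((f u).toReal
      + (|F u - F (x (n + 1)) - ⟪gradient F (x n), u - x (n + 1)⟫|
        + αhi * |⟪u - x (n + 1), gradient g (x n)⟫|
        + β * |⟪u - x (n + 1), x (n - 1) - x n⟫|) / αlo : ℝ) : EReal) := by
  have ha : 0 < α n := hαlo.trans_le hα.1
  obtain ⟨hfx, hstep⟩ := EReal.ne_top_and_toReal_le_of_isMinOn ha hf (hx n hn) hu
  have hgap := inertialBregmanModel_sub_le (g := g) (F := F) (abs_le.2 ⟨by linarith, hα.2⟩)
    (abs_le.2 ⟨by linarith, hβ.2⟩) (x n) (x (n - 1)) u (x (n + 1))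
  set S := |F u - F (x (n + 1)) - ⟪gradient F (x n), u - x (n + 1)⟫|
    + αhi * |⟪u - x (n + 1), gradient g (x n)⟫| + β * |⟪u - x (n + 1), x (n - 1) - x n⟫|
  have hS : 0 ≤ S := by
    have : 0 ≤ αhi := ha.le.trans hα.2
    have : 0 ≤ β := hβ.1.trans hβ.2
    positivity
  rw [← EReal.coe_toReal hfx (hf _), EReal.coe_le_coe_iff]
  have h1 : (f (x (n + 1))).toReal - (f u).toReal ≤ S / α n := by
    rw [le_div_iff₀' ha]; linarith
  linarith [div_le_div_of_nonneg_left hS hαlo hα.1]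

theorem IsInertialBregmanSeq.tendsto_apply_comp {αlo αhi β : ℝ} {φ : ℕ → ℕ} {xb : E}
    (hx : IsInertialBregmanSeq f g F α βs x) (hf : ∀ z, f z ≠ ⊥)
    (hflsc : LowerSemicontinuousAt f xb) (hF : Continuous F) (hF' : Continuous (gradient F))
    (hg' : Continuous (gradient g)) (hαlo : 0 < αlo) (hα : ∀ n, 1 ≤ n → αlo ≤ α n ∧ α n ≤ αhi)
    (hβ : ∀ n, 1 ≤ n → 0 ≤ βs n ∧ βs n ≤ β)
    (hΔ : Tendsto (fun n => x (n + 1) - x n) atTop (𝓝 0)) (hφ : Tendsto φ atTop atTop)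
    (hxφ : Tendsto (fun k => x (φ k)) atTop (𝓝 xb)) :
    Tendsto (fun k => f (x (φ k))) atTop (𝓝 (f xb)) := by
  rcases eq_or_ne (f xb) ⊤ with htop | htop
  · exact hflsc.tendsto_comp_of_eventually_le hxφ (u := fun _ => ⊤)
      (htop ▸ tendsto_const_nhds) (Eventually.of_forall fun _ => le_top)
  -- the bound of `apply_succ_le` at `u = xb`, as a function of `(x_{n+1}, x_n, x_{n-1})`
  set S : E × E × E → ℝ := fun p => |F xb - F p.1 - ⟪gradient F p.2.1, xb - p.1⟫|
    + αhi * |⟪xb - p.1, gradient g p.2.1⟫| + β * |⟪xb - p.1, p.2.2 - p.2.1⟫|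
  have hS : Continuous S := by fun_prop
  have hx₁ := tendsto_comp_sub_one_of_tendsto_succ_sub hΔ hφ hxφ
  have hx₂ := tendsto_comp_sub_one_of_tendsto_succ_sub hΔ ((tendsto_sub_atTop_nat 1).comp hφ) hx₁
  have hSφ : Tendsto (fun k => S (x (φ k), x (φ k - 1), x (φ k - 1 - 1))) atTop (𝓝 0) := by
    have hS₀ : S (xb, xb, xb) = 0 := by simp [S]
    exact hS₀ ▸ (hS.tendsto _).comp (hxφ.prodMk_nhds (hx₁.prodMk_nhds hx₂))
  refine hflsc.tendsto_comp_of_eventually_le hxφ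
    (u := fun k => (((f xb).toReal + S (x (φ k), x (φ k - 1), x (φ k - 1 - 1)) / αlo : ℝ) : EReal))
    ?_ ?_
  · have h := EReal.tendsto_coe.2 ((tendsto_const_nhds (x := (f xb).toReal)).add
      (hSφ.div_const αlo))
    rwa [zero_div, add_zero, EReal.coe_toReal htop (hf xb)] at h
  · filter_upwards [hφ.eventually_ge_atTop 2] with k hk
    have h := hx.apply_succ_le (n := φ k - 1) (by omega) hf htop hαlo (hα _ (by omega))
      (hβ _ (by omega))
    rwa [Nat.sub_add_cancel (by omega : 1 ≤ φ k)] at h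

end Algorithm

theorem stmt12_general
    (m : ℕ)
    (f : EuclideanSpace ℝ (Fin m) → EReal)
    -- `f` is proper (never `⊥`, somewhere finite), lower semicontinuous and bounded below
    (hfbot : ∀ z, f z ≠ ⊥) (hfproper : ∃ z, f z ≠ ⊤)
    (hflsc : LowerSemicontinuous f)
    (hfbdd : ∃ cl : ℝ, ∀ z, (cl : EReal) ≤ f z)
    -- `g` is differentiable with `Lg`-Lipschitz gradient
    (g : EuclideanSpace ℝ (Fin m) → ℝ) (Lg : ℝ)
    (hgdiff : Differentiable ℝ g)
    (hglip : ∀ z w, ‖gradient g z - gradient g w‖ ≤ Lg * ‖z - w‖)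
    -- `F` is `σ`-strongly convex and differentiable with `LF`-Lipschitz gradient
    (F : EuclideanSpace ℝ (Fin m) → ℝ) (σ LF : ℝ) (hσ : 0 < σ)
    (hFconv : ConvexOn ℝ Set.univ fun z => F z - σ / 2 * ‖z‖ ^ 2)
    (hFdiff : Differentiable ℝ F)
    (hFlip : ∀ z w, ‖gradient F z - gradient F w‖ ≤ LF * ‖z - w‖)
    -- parameters of the algorithm
    (αlo αhi β : ℝ) (hαlo : 0 < αlo) (hβ : 0 ≤ β)
    (α βs : ℕ → ℝ)
    (hα : ∀ n, 1 ≤ n → αlo ≤ α n ∧ α n ≤ αhi)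
    (hβs : ∀ n, 1 ≤ n → 0 ≤ βs n ∧ βs n ≤ β)
    -- the sequence generated by Algorithm 1:
    -- `x (n+1)` minimizes `u ↦ D_F(u, x n) + α n • ⟪u, ∇g(x n)⟫ + βs n • ⟪u, x (n-1) - x n⟫ + α n • f u`
    (x : ℕ → EuclideanSpace ℝ (Fin m))
    (halg : ∀ n, 1 ≤ n → ∀ u,
      ((F (x (n + 1)) - F (x n) - ⟪gradient F (x n), x (n + 1) - x n⟫
          + α n * ⟪x (n + 1), gradient g (x n)⟫
          + βs n * ⟪x (n + 1), x (n - 1) - x n⟫ : ℝ) : EReal)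
        + (α n : EReal) * f (x (n + 1))
      ≤ ((F u - F (x n) - ⟪gradient F (x n), u - x n⟫
          + α n * ⟪u, gradient g (x n)⟫
          + βs n * ⟪u, x (n - 1) - x n⟫ : ℝ) : EReal)
        + (α n : EReal) * f u)
    -- the parameters `μ, αlo, β` satisfy `μ(σ - Lg·αlo) > β(μ² + 1)` and `αhi` is chosen
    -- with `αlo < αhi` such that `M1 > M2`
    (μ : ℝ) (hμ : 0 < μ)
    (M1 M2 : ℝ)
    (hM1 : M1 = (σ - αhi * Lg) / (2 * αhi) - μ * β / (2 * αlo))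
    (hM2 : M2 = β / (2 * μ * αlo))
    (hM : M2 < M1)

    -- `f + g` is coercive
    (hcoer : Tendsto (fun z => f z + ((g z : ℝ) : EReal))
      (comap (fun z : EuclideanSpace ℝ (Fin m) => ‖z‖) atTop) (𝓝 ⊤))
    :
    (∀ (φ : ℕ → ℕ) (xb : EuclideanSpace ℝ (Fin m)), StrictMono φ →
      Tendsto (fun k => x (φ k)) atTop (𝓝 xb) →
      Tendsto (fun k => f (x (φ k))
          + ((g (x (φ k)) + M2 * ‖x (φ k) - x (φ k - 1)‖ ^ 2 : ℝ) : EReal))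
        atTop (𝓝 (f xb + ((g xb : ℝ) : EReal)))) ∧
    (∃ (φ : ℕ → ℕ) (xb : EuclideanSpace ℝ (Fin m)), StrictMono φ ∧
      Tendsto (fun k => x (φ k)) atTop (𝓝 xb)) := by
  have hx : IsInertialBregmanSeq f g F α βs x := fun n hn => isMinOn_univ_iff.2 (halg n hn)
  have hfin : ∀ n, 2 ≤ n → f (x n) ≠ ⊤ := fun n =>
    hx.ne_top hfbot hfproper fun k hk => hαlo.trans_le (hα k hk).1
  have hV : ∀ n, 2 ≤ n → inertialLyapunov f g M2 x (n + 1) + (M1 - M2) * ‖x (n + 1) - x n‖ ^ 2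
      ≤ inertialLyapunov f g M2 x n := fun n hn =>
    hx.inertialLyapunov_succ_add_le (by omega) hfbot (hfin n hn)
      (strongConvexOn_iff_convex.2 hFconv) (hFdiff _) hgdiff (hglip · _) hσ.le hμ hαlo
      (hα n (by omega)) (hβs n (by omega)) hM1 hM2
  have hM2nn : 0 ≤ M2 := hM2 ▸ by positivity
  have hbdd := isBounded_range_of_inertialLyapunov
    (comap_norm_atTop (E := EuclideanSpace ℝ (Fin m)) ▸ hcoer) hfbot hfin hM2nn (sub_pos.2 hM).le hV
  have hΔ := tendsto_succ_sub_of_inertialLyapunov hbdd hgdiff.continuous hfbdd hfin hM2nn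
    (sub_pos.2 hM) hV
  refine ⟨fun φ xb hφ hxφ => ?_, ?_⟩
  · have hf := hx.tendsto_apply_comp hfbot (hflsc xb) hFdiff.continuous
      (continuous_of_norm_sub_le_mul hFlip) (continuous_of_norm_sub_le_mul hglip) hαlo hα hβs hΔ
      hφ.tendsto_atTop hxφ
    have hgV : Tendsto (fun k => g (x (φ k)) + M2 * ‖x (φ k) - x (φ k - 1)‖ ^ 2) atTop
        (𝓝 (g xb)) := by
      have hx₁ := tendsto_comp_sub_one_of_tendsto_succ_sub hΔ hφ.tendsto_atTop hxφ
      simpa using ((hgdiff.continuous.tendsto xb).comp hxφ).add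
        (((hxφ.sub hx₁).norm.pow 2).const_mul M2)
    exact (EReal.continuousAt_add (Or.inr (EReal.coe_ne_bot _))
      (Or.inr (EReal.coe_ne_top _))).tendsto.comp (hf.prodMk_nhds (EReal.tendsto_coe.2 hgV))
  · obtain ⟨xb, -, φ, hφ, hxφ⟩ := tendsto_subseq_of_bounded hbdd fun n => Set.mem_range_self n
    exact ⟨φ, xb, hφ, hxφ⟩

/-- Lemma 3.5 (H3): along any convergent subsequence `x (φ k) → xb` one has
`H(x_{n_k}, x_{n_k - 1}) → H(xb, xb) = (f+g)(xb)`, and at least one convergent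
subsequence exists. -/
theorem stmt12
    (m : ℕ)
    (f : EuclideanSpace ℝ (Fin m) → EReal)
    -- `f` is proper (never `⊥`, somewhere finite), lower semicontinuous and bounded below
    (hfbot : ∀ z, f z ≠ ⊥) (hfproper : ∃ z, f z ≠ ⊤)
    (hflsc : LowerSemicontinuous f)
    (hfbdd : ∃ cl : ℝ, ∀ z, (cl : EReal) ≤ f z)
    -- `g` is differentiable with `Lg`-Lipschitz gradient
    (g : EuclideanSpace ℝ (Fin m) → ℝ) (Lg : ℝ) (hLg : 0 ≤ Lg)
    (hgdiff : Differentiable ℝ g)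
    (hglip : ∀ z w, ‖gradient g z - gradient g w‖ ≤ Lg * ‖z - w‖)
    -- `F` is `σ`-strongly convex and differentiable with `LF`-Lipschitz gradient
    (F : EuclideanSpace ℝ (Fin m) → ℝ) (σ LF : ℝ) (hσ : 0 < σ) (hLF : 0 < LF)
    (hFconv : ConvexOn ℝ Set.univ fun z => F z - σ / 2 * ‖z‖ ^ 2)
    (hFdiff : Differentiable ℝ F)
    (hFlip : ∀ z w, ‖gradient F z - gradient F w‖ ≤ LF * ‖z - w‖)
    -- parameters of the algorithm
    (αlo αhi β : ℝ) (hαlo : 0 < αlo) (hαorder : αlo ≤ αhi) (hβ : 0 ≤ β)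
    (α βs : ℕ → ℝ)
    (hα : ∀ n, 1 ≤ n → αlo ≤ α n ∧ α n ≤ αhi)
    (hβs : ∀ n, 1 ≤ n → 0 ≤ βs n ∧ βs n ≤ β)
    -- the sequence generated by Algorithm 1:
    -- `x (n+1)` minimizes `u ↦ D_F(u, x n) + α n • ⟪u, ∇g(x n)⟫ + βs n • ⟪u, x (n-1) - x n⟫ + α n • f u`
    (x : ℕ → EuclideanSpace ℝ (Fin m))
    (halg : ∀ n, 1 ≤ n → ∀ u,
      ((F (x (n + 1)) - F (x n) - ⟪gradient F (x n), x (n + 1) - x n⟫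
          + α n * ⟪x (n + 1), gradient g (x n)⟫
          + βs n * ⟪x (n + 1), x (n - 1) - x n⟫ : ℝ) : EReal)
        + (α n : EReal) * f (x (n + 1))
      ≤ ((F u - F (x n) - ⟪gradient F (x n), u - x n⟫
          + α n * ⟪u, gradient g (x n)⟫
          + βs n * ⟪u, x (n - 1) - x n⟫ : ℝ) : EReal)
        + (α n : EReal) * f u)
    -- the parameters `μ, αlo, β` satisfy `μ(σ - Lg·αlo) > β(μ² + 1)` and `αhi` is chosen
    -- with `αlo < αhi` such that `M1 > M2`
    (μ : ℝ) (hμ : 0 < μ)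
    (hcond : β * (μ ^ 2 + 1) < μ * (σ - Lg * αlo))
    (M1 M2 : ℝ)
    (hM1 : M1 = (σ - αhi * Lg) / (2 * αhi) - μ * β / (2 * αlo))
    (hM2 : M2 = β / (2 * μ * αlo))
    (hαstrict : αlo < αhi) (hM : M2 < M1)

    -- `f + g` is coercive
    (hcoer : Tendsto (fun z => f z + ((g z : ℝ) : EReal))
      (comap (fun z : EuclideanSpace ℝ (Fin m) => ‖z‖) atTop) (𝓝 ⊤))
    :
    (∀ (φ : ℕ → ℕ) (xb : EuclideanSpace ℝ (Fin m)), StrictMono φ →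
      Tendsto (fun k => x (φ k)) atTop (𝓝 xb) →
      Tendsto (fun k => f (x (φ k))
          + ((g (x (φ k)) + M2 * ‖x (φ k) - x (φ k - 1)‖ ^ 2 : ℝ) : EReal))
        atTop (𝓝 (f xb + ((g xb : ℝ) : EReal)))) ∧
    (∃ (φ : ℕ → ℕ) (xb : EuclideanSpace ℝ (Fin m)), StrictMono φ ∧
      Tendsto (fun k => x (φ k)) atTop (𝓝 xb)) :=
  stmt12_general m f hfbot hfproper hflsc hfbdd g Lg hgdiff hglip F σ LF hσ hFconv hFdiff hFlip αlo
    αhi β hαlo hβ α βs hα hβs x halg μ hμ M1 M2 hM1 hM2 hM hcoer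
end
end
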